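/- arXiv:2108.09733 — 2 statements merged into one kernel-verified Lean document; each statement's English description precedes it below -/
import Mathlib

section
/- For every odd n, the sequence of functions p \mapsto L(p,n) converges uniformly on [0,1] to the Bayes error L*(p) = min{p, 1-p} as n \to \infty along odd values. -/
open Finset



/-- The expected majority-vote error `L(p, n)` for `n = 2k+1` i.i.d. Bernoulli(p) labels. -/
noncomputable def majErr (k : ℕ) (p : ℝ) : ℝ :=
  ∑ i ∈ Finset.range (k + 1),
      (Nat.choose (2 * k + 1) i : ℝ) * p ^ (i + 1) * (1 - p) ^ (2 * k + 1 - i)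
    + ∑ i ∈ Finset.range (k + 1),
      (Nat.choose (2 * k + 1) i : ℝ) * p ^ (2 * k + 1 - i) * (1 - p) ^ (i + 1)


lemma var_real (n : ℕ) (p : ℝ) :
    ∑ ν ∈ Finset.range (n+1),
      ((n : ℝ) * p - ν)^2 * ((n.choose ν : ℝ) * p^ν * (1-p)^(n-ν)) = n * p * (1-p) := by
  have h := bernsteinPolynomial.variance ℝ n
  have h2 := congrArg (Polynomial.eval p) h
  simp only [Polynomial.eval_finset_sum, bernsteinPolynomial, Polynomial.eval_mul,
    Polynomial.eval_pow, Polynomial.eval_sub, Polynomial.eval_smul, Polynomial.eval_one,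
    Polynomial.eval_X, Polynomial.eval_natCast, nsmul_eq_mul, smul_eq_mul] at h2
  rw [← h2]

/-- lower tail -/
noncomputable def lowT (k : ℕ) (p : ℝ) : ℝ :=
  ∑ i ∈ Finset.range (k+1), ((2*k+1).choose i : ℝ) * p^i * (1-p)^(2*k+1-i)

/-- upper tail -/
noncomputable def upT (k : ℕ) (p : ℝ) : ℝ :=
  ∑ i ∈ Finset.Ico (k+1) (2*k+2), ((2*k+1).choose i : ℝ) * p^i * (1-p)^(2*k+1-i)

lemma low_add_up (k : ℕ) (p : ℝ) : lowT k p + upT k p = 1 := by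
  rw [lowT, upT, Finset.range_eq_Ico,
    Finset.sum_Ico_consecutive _ (Nat.zero_le _) (by omega : k+1 ≤ 2*k+2)]
  have h := add_pow p (1-p) (2*k+1)
  simp only [add_sub_cancel, one_pow] at h
  rw [← Finset.range_eq_Ico, (by omega : 2*k+2 = 2*k+1+1)]
  conv_rhs => rw [h]
  exact Finset.sum_congr rfl fun ν _ => by ring

lemma majErr_eq (k : ℕ) (p : ℝ) :
    majErr k p = p * lowT k p + (1-p) * upT k p := by
  rw [majErr, lowT, upT, Finset.mul_sum, Finset.mul_sum]
  congr 1
  · exact Finset.sum_congr rfl fun ν _ => by ring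
  · refine Finset.sum_nbij' (fun i => 2*k+1 - i) (fun j => 2*k+1 - j) ?_ ?_ ?_ ?_ ?_
    · intro i hi; simp only [Finset.mem_range] at hi; simp only [Finset.mem_Ico]; omega
    · intro j hj; simp only [Finset.mem_Ico] at hj; simp only [Finset.mem_range]; omega
    · intro i hi; simp only [Finset.mem_range] at hi; omega
    · intro j hj; simp only [Finset.mem_Ico] at hj; omega
    · intro i hi
      simp only [Finset.mem_range] at hi
      rw [Nat.choose_symm (by omega : i ≤ 2*k+1),
        (by omega : 2*k+1 - (2*k+1 - i) = i)]
      ring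

lemma upT_nonneg (k : ℕ) {p : ℝ} (h0 : 0 ≤ p) (h1 : p ≤ 1) : 0 ≤ upT k p :=
  Finset.sum_nonneg fun i _ => (mul_nonneg (mul_nonneg (Nat.cast_nonneg _) (pow_nonneg h0 _)) (pow_nonneg (by linarith : (0:ℝ) ≤ 1-p) _))

lemma lowT_nonneg (k : ℕ) {p : ℝ} (h0 : 0 ≤ p) (h1 : p ≤ 1) : 0 ≤ lowT k p :=
  Finset.sum_nonneg fun i _ => (mul_nonneg (mul_nonneg (Nat.cast_nonneg _) (pow_nonneg h0 _)) (pow_nonneg (by linarith : (0:ℝ) ≤ 1-p) _))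

lemma upT_le_one (k : ℕ) {p : ℝ} (h0 : 0 ≤ p) (h1 : p ≤ 1) : upT k p ≤ 1 := by
  have := low_add_up k p
  have := lowT_nonneg k h0 h1
  linarith

lemma cheb (k : ℕ) {p : ℝ} (h0 : 0 ≤ p) (h2 : p ≤ 1/2) :
    upT k p * (((2*k+1 : ℕ) : ℝ) * (1-2*p) / 2)^2 ≤ ((2*k+1 : ℕ) : ℝ) / 4 := by
  set n : ℕ := 2*k+1 with hn
  have hnp : ((n:ℝ)) = 2*k+1 := by push_cast [hn]; ring
  calc upT k p * ((n:ℝ) * (1-2*p) / 2)^2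
      = ∑ i ∈ Finset.Ico (k+1) (2*k+2),
          ((n:ℝ) * (1-2*p) / 2)^2 * ((n.choose i : ℝ) * p^i * (1-p)^(n-i)) := by
        rw [upT, Finset.sum_mul]
        exact Finset.sum_congr rfl fun i _ => by ring
    _ ≤ ∑ i ∈ Finset.Ico (k+1) (2*k+2),
          ((n:ℝ) * p - i)^2 * ((n.choose i : ℝ) * p^i * (1-p)^(n-i)) := by
        refine Finset.sum_le_sum fun i hi => ?_
        simp only [Finset.mem_Ico] at hi
        have hterm : (0:ℝ) ≤ (n.choose i : ℝ) * p^i * (1-p)^(n-i) := (mul_nonneg (mul_nonneg (Nat.cast_nonneg _) (pow_nonneg h0 _)) (pow_nonneg (by linarith : (0:ℝ) ≤ 1-p) _))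
        refine mul_le_mul_of_nonneg_right ?_ hterm
        have hi' : (k:ℝ) + 1 ≤ i := by exact_mod_cast hi.1
        have h1 : (n:ℝ) * (1-2*p) / 2 ≤ (i:ℝ) - (n:ℝ)*p := by
          rw [hnp]; nlinarith
        have h2' : (0:ℝ) ≤ (n:ℝ) * (1-2*p) / 2 := by
          rw [hnp]; nlinarith [Nat.cast_nonneg (α := ℝ) k]
        calc ((n:ℝ) * (1-2*p) / 2)^2 ≤ ((i:ℝ) - (n:ℝ)*p)^2 := by nlinarith
          _ = ((n:ℝ)*p - i)^2 := by ring
    _ ≤ ∑ i ∈ Finset.range (n+1),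
          ((n:ℝ) * p - i)^2 * ((n.choose i : ℝ) * p^i * (1-p)^(n-i)) := by
        refine Finset.sum_le_sum_of_subset_of_nonneg ?_ fun i _ _ => mul_nonneg (sq_nonneg _) (mul_nonneg (mul_nonneg (Nat.cast_nonneg _) (pow_nonneg h0 _)) (pow_nonneg (by linarith : (0:ℝ) ≤ 1-p) _))
        intro i hi; simp only [Finset.mem_Ico] at hi; simp only [Finset.mem_range]; omega
    _ = (n:ℝ) * p * (1-p) := var_real n p
    _ ≤ (n:ℝ) / 4 := by nlinarith [mul_nonneg (Nat.cast_nonneg (α := ℝ) n) (sq_nonneg (1-2*p))]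

lemma key (k : ℕ) {p : ℝ} (h0 : 0 ≤ p) (h2 : p ≤ 1/2) :
    |majErr k p - min p (1 - p)| ≤ 1 / Real.sqrt (2*k+1) := by
  have h1 : p ≤ 1 := by linarith
  have hmin : min p (1-p) = p := min_eq_left (by linarith)
  have hdiff : majErr k p - p = (1 - 2*p) * upT k p := by
    have hs := low_add_up k p
    rw [majErr_eq]; nlinarith [hs]
  set n : ℕ := 2*k+1 with hn
  have hnp : ((n:ℝ)) = 2*(k:ℝ)+1 := by push_cast [hn]; ring
  have hnpos : (0:ℝ) < n := by rw [hnp]; positivity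
  set s : ℝ := Real.sqrt (2*k+1) with hs
  have hsn : s^2 = (n:ℝ) := by
    rw [hs, Real.sq_sqrt (by positivity), hnp]
  have hs1 : 1 ≤ s := by
    nlinarith [Real.sqrt_nonneg (2*(k:ℝ)+1), hsn, hnp]
  have hspos : 0 < s := by linarith
  set t : ℝ := 1 - 2*p with ht
  have ht0 : 0 ≤ t := by rw [ht]; linarith
  have hT0 := upT_nonneg k h0 h1
  have hT1 := upT_le_one k h0 h1
  have hcheb : upT k p * ((n:ℝ) * t / 2)^2 ≤ (n:ℝ)/4 := cheb k h0 h2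
  clear_value n s t
  rw [hmin, hdiff, abs_of_nonneg (mul_nonneg ht0 hT0)]
  rw [le_div_iff₀ hspos]
  rcases le_or_gt (t*s) 1 with hts | hts
  · nlinarith
  · -- T * (n t / 2)^2 ≤ n/4  ⇒  T * n * t^2 ≤ 1
    have h5 : upT k p * (n:ℝ)^2 * t^2 ≤ (n:ℝ) := by nlinarith [hcheb]
    have h4 : upT k p * (n:ℝ) * t^2 ≤ 1 := by
      rw [← mul_le_mul_iff_of_pos_right hnpos]; nlinarith [h5]
    have : upT k p * s^2 * t^2 ≤ 1 := by rw [hsn]; linarith [h4]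
    nlinarith

lemma majErr_symm (k : ℕ) (p : ℝ) : majErr k (1 - p) = majErr k p := by
  rw [majErr, majErr, add_comm]
  congr 1
  · exact Finset.sum_congr rfl fun i _ => by rw [sub_sub_cancel]; ring
  · exact Finset.sum_congr rfl fun i _ => by rw [sub_sub_cancel]; ring


/-- `L(·, n)` converges uniformly on `[0,1]` to the Bayes error `min{p, 1-p}`
as `n → ∞` along the odd values `n = 2k+1`. -/
theorem majErr_tendstoUniformly :
    ∀ ε > (0 : ℝ), ∃ K : ℕ, ∀ k ≥ K, ∀ p ∈ Set.Icc (0 : ℝ) 1,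
      |majErr k p - min p (1 - p)| < ε := by
  intro ε hε
  refine ⟨⌈ε⁻¹ ^ 2⌉₊, fun k hk p hp => ?_⟩
  obtain ⟨hp0, hp1⟩ := hp
  have hkey : |majErr k p - min p (1 - p)| ≤ 1 / Real.sqrt (2*k+1) := by
    rcases le_or_gt p (1/2) with h | h
    · exact key k hp0 h
    · have h' := key k (by linarith : (0:ℝ) ≤ 1 - p) (by linarith)
      rwa [majErr_symm, sub_sub_cancel, min_comm] at h'
  have hn : ε⁻¹ ^ 2 < 2*(k:ℝ)+1 := by
    have h1 : ε⁻¹ ^ 2 ≤ (⌈ε⁻¹ ^ 2⌉₊ : ℝ) := Nat.le_ceil _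
    have h2 : ((⌈ε⁻¹ ^ 2⌉₊ : ℕ) : ℝ) ≤ (k : ℝ) := by exact_mod_cast hk
    linarith
  have hs : ε⁻¹ < Real.sqrt (2*k+1) := by
    have := Real.sqrt_lt_sqrt (by positivity) hn
    rwa [Real.sqrt_sq (by positivity)] at this
  have hs0 : (0:ℝ) < Real.sqrt (2*k+1) := lt_trans (by positivity) hs
  have : 1 / Real.sqrt (2*k+1) < ε := by
    rw [div_lt_iff₀ hs0]
    have : ε * ε⁻¹ = 1 := mul_inv_cancel₀ (ne_of_gt hε)
    nlinarith [hs, hε]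
  linarith
end

section
/- If F and G are distinct closed subsets of S^1 and at least one of them contains at least two elements, then the sigma-algebras \Sigma_F and \Sigma_G (generated by half-open cyclic intervals with endpoints in F, respectively G) are distinct. -/
open Set

/-- The half-open cyclic interval `[a, b) = {a} ∪ {z : sbtw a z b}` on the circle. -/
def hoArc (a b : AddCircle (1 : ℝ)) : Set (AddCircle (1 : ℝ)) :=
  {a} ∪ {z | sbtw a z b}

/-- The sigma-algebra on the circle generated by the half-open cyclic intervals with
endpoints in `A`. -/
def sigmaHo (A : Set (AddCircle (1 : ℝ))) : MeasurableSpace (AddCircle (1 : ℝ)) :=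
  MeasurableSpace.generateFrom {S | ∃ a ∈ A, ∃ b ∈ A, S = hoArc a b}

private lemma coe_toIcoMod' (a s : ℝ) : ((toIcoMod one_pos a s : ℝ) : AddCircle (1:ℝ)) = ↑s := by
  rw [QuotientAddGroup.eq_iff_sub_mem]
  exact ⟨-(toIcoDiv one_pos a s), by simp [toIcoMod_sub_self]⟩

private lemma btw_coords {x₁ x₂ x₃ : ℝ} : Btw.btw (x₁ : AddCircle (1:ℝ)) x₂ x₃ ↔
    toIcoMod one_pos x₁ x₂ ≤ toIocMod one_pos x₁ x₃ := QuotientAddGroup.btw_coe_iff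

private lemma sbtw_coords {p' δ : ℝ} (hδ : 0 < δ) (h1 : 2*δ < 1) {ra rb rz : ℝ}
    (ha : ra ∈ Set.Ico (p'+2*δ) (p'+1)) (hb : rb ∈ Set.Ico (p'+2*δ) (p'+1))
    (hz : rz ∈ Set.Ioo p' (p'+2*δ)) :
    ((↑rz : AddCircle (1:ℝ)) ∈ hoArc ↑ra ↑rb ↔ rb < ra) := by
  have hzra : rz < ra := hz.2.trans_le ha.1
  have hzrb : rz < rb := hz.2.trans_le hb.1
  have hne : (↑rz : AddCircle (1:ℝ)) ≠ ↑ra := by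
    rw [Ne, AddCircle.coe_eq_coe_iff_of_mem_Ico (a := p')
      ⟨hz.1.le, hz.2.trans (by linarith)⟩ ⟨by linarith [ha.1], ha.2⟩]
    exact hzra.ne
  have hIcoa : toIcoMod one_pos ra rz = rz + 1 := by
    rw [toIcoMod_eq_iff]
    exact ⟨⟨by linarith [ha.2, hz.1], by linarith⟩, ⟨-1, by simp⟩⟩
  have hIcob : toIcoMod one_pos rb rz = rz + 1 := by
    rw [toIcoMod_eq_iff]
    exact ⟨⟨by linarith [hb.2, hz.1], by linarith⟩, ⟨-1, by simp⟩⟩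
  have harc : (↑rz : AddCircle (1:ℝ)) ∈ hoArc ↑ra ↑rb ↔ sbtw (↑ra : AddCircle (1:ℝ)) ↑rz ↑rb := by
    simp only [hoArc, Set.mem_union, Set.mem_singleton_iff, Set.mem_setOf_eq]
    exact or_iff_right hne
  rw [harc, sbtw_iff_btw_not_btw, btw_coords, btw_coords, hIcoa, hIcob]
  rcases lt_trichotomy ra rb with h | h | h
  · have : toIocMod one_pos ra rb = rb := by
      rw [toIocMod_eq_iff]; exact ⟨⟨h, by linarith [hb.2, ha.1]⟩, ⟨0, by simp⟩⟩
    rw [this]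
    constructor
    · rintro ⟨h1', -⟩; linarith [hz.1, hb.2]
    · intro h'; exact absurd h' (by linarith)
  · subst h
    have : toIocMod one_pos ra ra = ra + 1 := by
      rw [toIocMod_eq_iff]; exact ⟨⟨by linarith, le_rfl⟩, ⟨-1, by simp⟩⟩
    rw [this]
    constructor
    · rintro ⟨-, h2'⟩; exact absurd (by linarith [hz.2, ha.1] : rz + 1 ≤ ra + 1) h2'
    · intro h'; exact absurd h' (lt_irrefl _)
  · have hb' : toIocMod one_pos ra rb = rb + 1 := by
      rw [toIocMod_eq_iff]; exact ⟨⟨by linarith [hb.1, ha.2], by linarith⟩, ⟨-1, by simp⟩⟩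
    have ha' : toIocMod one_pos rb ra = ra := by
      rw [toIocMod_eq_iff]; exact ⟨⟨h, by linarith [ha.2, hb.1]⟩, ⟨0, by simp⟩⟩
    rw [hb', ha']
    exact ⟨fun _ => h, fun _ => ⟨by linarith, fun h' => by linarith [hz.1, ha.2]⟩⟩

private lemma singleton_mem {A : Set (AddCircle (1:ℝ))} {x : AddCircle (1:ℝ)} (hx : x ∈ A) :
    @MeasurableSet _ (sigmaHo A) {x} := by
  have h : ({x} : Set (AddCircle (1:ℝ))) = hoArc x x := by
    simp only [hoArc]
    have : {z : AddCircle (1:ℝ) | sbtw x z x} = ∅ := by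
      ext z; simp only [Set.mem_setOf_eq, Set.mem_empty_iff_false, iff_false]
      exact sbtw_irrefl_left_right
    rw [this, Set.union_empty]
  exact MeasurableSpace.measurableSet_generateFrom ⟨x, hx, x, hx, h⟩

private lemma key_s19 {G : Set (AddCircle (1:ℝ))} (hG : IsClosed G) {x : AddCircle (1:ℝ)}
    (hx : x ∉ G) : ¬ @MeasurableSet _ (sigmaHo G) {x} := by
  obtain ⟨t, rfl⟩ := QuotientAddGroup.mk_surjective x
  -- find ε
  have hopen : IsOpen ((fun s : ℝ => (↑s : AddCircle (1:ℝ))) ⁻¹' Gᶜ) :=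
    hG.isOpen_compl.preimage (AddCircle.continuous_mk' 1)
  obtain ⟨ε, hε, hball⟩ := Metric.isOpen_iff.mp hopen t hx
  have hball' : ∀ s : ℝ, |s - t| < ε → (↑s : AddCircle (1:ℝ)) ∉ G := by
    intro s hs
    exact hball (by rwa [Metric.mem_ball, Real.dist_eq])
  set δ : ℝ := min (ε/2) (1/4) with hδdef
  have hδ : 0 < δ := lt_min (by linarith) (by norm_num)
  have hδε : δ < ε := lt_of_le_of_lt (min_le_left _ _) (by linarith)
  have h2δ : 2*δ < 1 := by
    have := min_le_right (ε/2) (1/4); simp only [← hδdef] at this; linarith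
  set p' : ℝ := t - δ with hp'def
  set U : Set (AddCircle (1:ℝ)) := (fun s : ℝ => (↑s : AddCircle (1:ℝ))) '' Set.Ioo p' (p'+2*δ)
    with hUdef
  -- the invariant sigma-algebra
  let m : MeasurableSpace (AddCircle (1:ℝ)) :=
    { MeasurableSet' := fun S => U ⊆ S ∨ Disjoint U S
      measurableSet_empty := Or.inr (Set.disjoint_empty U)
      measurableSet_compl := fun S hS => by
        rcases hS with h | h
        · exact Or.inr (Set.disjoint_left.mpr fun z hz hz' => hz' (h hz))
        · exact Or.inl (fun z hz => Set.disjoint_left.mp h hz)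
      measurableSet_iUnion := fun f hf => by
        by_cases h : ∃ i, U ⊆ f i
        · obtain ⟨i, hi⟩ := h
          exact Or.inl (hi.trans (Set.subset_iUnion f i))
        · push_neg at h
          refine Or.inr (Set.disjoint_left.mpr fun z hz hz' => ?_)
          obtain ⟨i, hi⟩ := Set.mem_iUnion.mp hz'
          exact Set.disjoint_left.mp ((hf i).resolve_left (h i)) hz hi }
  -- every set in sigmaHo G is in m
  have hle : sigmaHo G ≤ m := by
    apply MeasurableSpace.generateFrom_le
    rintro S ⟨a, haG, b, hbG, rfl⟩
    -- representative of a point of G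
    have hrep : ∀ c ∈ G, ∃ rc : ℝ, (↑rc : AddCircle (1:ℝ)) = c ∧
        rc ∈ Set.Ico (p'+2*δ) (p'+1) := by
      intro c hc
      obtain ⟨s, rfl⟩ := QuotientAddGroup.mk_surjective c
      refine ⟨toIcoMod one_pos p' s, coe_toIcoMod' p' s, ?_⟩
      have hmem := toIcoMod_mem_Ico one_pos p' s
      constructor
      · by_contra hlt
        push_neg at hlt
        refine hball' (toIcoMod one_pos p' s) ?_ (by rwa [coe_toIcoMod' p' s])
        rw [abs_lt]
        constructor <;> [skip; skip] <;>
          simp only [hp'def] at hmem hlt <;> [linarith [hmem.1]; linarith]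
      · exact hmem.2
    obtain ⟨ra, hra, hraI⟩ := hrep a haG
    obtain ⟨rb, hrb, hrbI⟩ := hrep b hbG
    by_cases hlt : rb < ra
    · refine Or.inl ?_
      rintro z ⟨s, hs, rfl⟩
      rw [← hra, ← hrb]
      exact (sbtw_coords hδ h2δ hraI hrbI hs).mpr hlt
    · refine Or.inr (Set.disjoint_left.mpr ?_)
      rintro z ⟨s, hs, rfl⟩ hz'
      rw [← hra, ← hrb] at hz'
      exact hlt ((sbtw_coords hδ h2δ hraI hrbI hs).mp hz')
  intro hmeas
  have hx' : ((↑t : AddCircle (1:ℝ))) ∈ U := ⟨t, ⟨by simp [hp'def]; linarith, by simp [hp'def]; linarith⟩, rfl⟩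
  have hy : ((↑(t + δ/2) : AddCircle (1:ℝ))) ∈ U :=
    ⟨t + δ/2, ⟨by simp [hp'def]; linarith, by simp [hp'def]; linarith⟩, rfl⟩
  have hyx : ((↑(t + δ/2) : AddCircle (1:ℝ))) ≠ ↑t := by
    rw [Ne, AddCircle.coe_eq_coe_iff_of_mem_Ico (a := t)
      ⟨by linarith, by linarith⟩ ⟨le_rfl, by linarith⟩]
    linarith
  rcases hle _ hmeas with h | h
  · exact hyx (h hy)
  · exact Set.disjoint_left.mp h hx' rfl

/-- Distinct closed subsets of the circle, at least one of which has two or more points,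
generate distinct sigma-algebras of half-open cyclic intervals. -/
theorem sigmaHo_injective (F G : Set (AddCircle (1 : ℝ))) (hF : IsClosed F)
    (hG : IsClosed G) (hne : F ≠ G)
    (h2 : (∃ a ∈ F, ∃ b ∈ F, a ≠ b) ∨ (∃ a ∈ G, ∃ b ∈ G, a ≠ b)) :
    sigmaHo F ≠ sigmaHo G := by
  intro h
  by_cases hFG : F ⊆ G
  · have hGF : ¬ G ⊆ F := fun hGF => hne (le_antisymm hFG hGF)
    obtain ⟨x, hxG, hxF⟩ := Set.not_subset.mp hGF
    exact key_s19 hF hxF (h ▸ singleton_mem hxG)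
  · obtain ⟨x, hxF, hxG⟩ := Set.not_subset.mp hFG
    exact key_s19 hG hxG (h.symm ▸ singleton_mem hxF)
end
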